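/- arXiv:2112.03363 — 3 statements merged into one kernel-verified Lean document; each statement's English description precedes it below -/
import Mathlib

section
/- Let A be an invertible linear operator on a finite-dimensional complex vector space V, and let f be a vector in the symmetric algebra of V* (a polynomial function on V). Then the span of the orbit {f, A*f, (A*)²f, …} under the induced pullback action is finite-dimensional. Conversely, if f is a formal power series (germ of a holomorphic function at 0 admitting a Taylor expansion) whose orbit span under A* is finite-dimensional, and all eigenvalues of A have absolute value less than 1, then f is a polynomial. -/
open scoped BigOperators
open Finset

/-- The pullback action f ↦ f ∘ A of a matrix A on polynomial functions on ℂⁿ. -/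
noncomputable def matrixPullback (n : ℕ) (A : Matrix (Fin n) (Fin n) ℂ) :
    MvPolynomial (Fin n) ℂ →ₐ[ℂ] MvPolynomial (Fin n) ℂ :=
  MvPolynomial.aeval (fun i => ∑ j, A i j • MvPolynomial.X j)

lemma matrixPullback_comp (n : ℕ) (A B : Matrix (Fin n) (Fin n) ℂ) :
    (matrixPullback n A).comp (matrixPullback n B) = matrixPullback n (B * A) := by
  apply MvPolynomial.algHom_ext
  intro i
  simp only [matrixPullback, AlgHom.comp_apply, MvPolynomial.aeval_X, map_sum,
    Finset.smul_sum, smul_smul, map_smul]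
  rw [Finset.sum_comm]
  refine Finset.sum_congr rfl fun l _ => ?_
  rw [← Finset.sum_smul, Matrix.mul_apply]

lemma matrixPullback_one (n : ℕ) :
    matrixPullback n (1 : Matrix (Fin n) (Fin n) ℂ) = AlgHom.id ℂ _ := by
  apply MvPolynomial.algHom_ext
  intro i
  simp [matrixPullback, Matrix.one_apply, ite_smul]

lemma matrixPullback_iterate (n : ℕ) (A : Matrix (Fin n) (Fin n) ℂ) (k : ℕ) :
    (⇑(matrixPullback n A))^[k] = ⇑(matrixPullback n (A ^ k)) := by
  induction k with
  | zero => simp [matrixPullback_one n]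
  | succ k ih =>
    rw [Function.iterate_succ', ih, pow_succ]
    ext g
    exact (DFunLike.congr_fun (matrixPullback_comp n A (A ^ k)) g).symm ▸ rfl

lemma matrixPullback_injective (n : ℕ) {A : Matrix (Fin n) (Fin n) ℂ} (hA : IsUnit A) :
    Function.Injective (matrixPullback n A) := by
  obtain ⟨B, hB⟩ : ∃ B, A * B = 1 := ⟨(↑hA.unit⁻¹ : Matrix (Fin n) (Fin n) ℂ), hA.mul_val_inv⟩
  intro x y hxy
  have := congrArg (matrixPullback n B) hxy
  have h2 := DFunLike.congr_fun (matrixPullback_comp n B A) x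
  have h3 := DFunLike.congr_fun (matrixPullback_comp n B A) y
  simp only [AlgHom.comp_apply] at h2 h3
  rw [h2, h3, hB, matrixPullback_one] at this
  simpa using this

lemma eval_matrixPullback (n : ℕ) (B : Matrix (Fin n) (Fin n) ℂ)
    (g : MvPolynomial (Fin n) ℂ) (x : Fin n → ℂ) :
    MvPolynomial.eval x (matrixPullback n B g) = MvPolynomial.eval (B.mulVec x) g := by
  have : (MvPolynomial.aeval x : MvPolynomial (Fin n) ℂ →ₐ[ℂ] ℂ).comp (matrixPullback n B)
      = MvPolynomial.aeval (B.mulVec x) := by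
    apply MvPolynomial.algHom_ext
    intro i
    simp [matrixPullback, Matrix.mulVec, dotProduct]
  have h := DFunLike.congr_fun this g
  simp only [AlgHom.comp_apply] at h
  rw [← MvPolynomial.coe_aeval_eq_eval, ← MvPolynomial.coe_aeval_eq_eval]
  exact h

lemma totalDegree_matrixPullback_le (n : ℕ) (A : Matrix (Fin n) (Fin n) ℂ)
    (g : MvPolynomial (Fin n) ℂ) :
    (matrixPullback n A g).totalDegree ≤ g.totalDegree := by
  classical
  conv_lhs => rw [g.as_sum]
  rw [map_sum]
  refine (MvPolynomial.totalDegree_finset_sum _ _).trans (Finset.sup_le fun d hd => ?_)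
  rw [matrixPullback, MvPolynomial.aeval_monomial]
  refine (MvPolynomial.totalDegree_mul _ _).trans ?_
  have h1 : (algebraMap ℂ (MvPolynomial (Fin n) ℂ) (MvPolynomial.coeff d g)).totalDegree = 0 :=
    MvPolynomial.totalDegree_C _
  rw [h1, zero_add]
  refine le_trans ?_ (MvPolynomial.le_totalDegree hd)
  rw [Finsupp.prod]
  refine (MvPolynomial.totalDegree_finset_prod _ _).trans ?_
  rw [Finsupp.sum]
  refine Finset.sum_le_sum fun i _ => ?_
  refine (MvPolynomial.totalDegree_pow _ _).trans ?_
  have h2 : (∑ j, A i j • MvPolynomial.X (R := ℂ) j).totalDegree ≤ 1 := by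
    refine (MvPolynomial.totalDegree_finset_sum _ _).trans (Finset.sup_le fun j _ => ?_)
    exact (MvPolynomial.totalDegree_smul_le _ _).trans (le_of_eq (MvPolynomial.totalDegree_X _))
  exact le_trans (Nat.mul_le_mul_left _ h2) (by omega)

lemma eval_smul_isHomogeneous {n : ℕ} {m : ℕ} {φ : MvPolynomial (Fin n) ℂ}
    (hφ : φ.IsHomogeneous m) (c : ℂ) (x : Fin n → ℂ) :
    MvPolynomial.eval (c • x) φ = c ^ m * MvPolynomial.eval x φ := by
  rw [MvPolynomial.eval_eq, MvPolynomial.eval_eq, Finset.mul_sum]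
  refine Finset.sum_congr rfl fun d hd => ?_
  have hdeg : ∑ i ∈ d.support, d i = m := by
    have h := hφ (MvPolynomial.mem_support_iff.mp hd)
    rw [← h]
    rw [show (Finsupp.weight 1 d : ℕ) = d.degree from
      congrFun (congrArg DFunLike.coe Finsupp.degree_eq_weight_one.symm) d]
    rfl
  simp only [Pi.smul_apply, smul_eq_mul, mul_pow]
  rw [Finset.prod_mul_distrib, Finset.prod_pow_eq_pow_sum, hdeg]
  ring

attribute [local instance] Matrix.linftyOpNormedAddCommGroup Matrix.linftyOpNormedRing
  Matrix.linftyOpNormedAlgebra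

lemma exists_pow_norm_lt_one (n : ℕ) (A : Matrix (Fin n) (Fin n) ℂ)
    (heig : ∀ μ ∈ spectrum ℂ A, ‖μ‖ < 1) :
    ∃ t : ℕ, 1 ≤ t ∧ ‖A ^ t‖ < 1 := by
  have hrad : spectralRadius ℂ A < 1 := by
    rcases Set.eq_empty_or_nonempty (spectrum ℂ A) with he | hne
    · rw [spectralRadius]
      simp [he]
    · obtain ⟨k, hk, hkr⟩ := spectrum.exists_nnnorm_eq_spectralRadius_of_nonempty (𝕜 := ℂ) hne
      rw [← hkr]
      exact_mod_cast heig k hk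
  have hG := spectrum.pow_nnnorm_pow_one_div_tendsto_nhds_spectralRadius A
  have hev : ∀ᶠ t : ℕ in Filter.atTop,
      ((‖A ^ t‖₊ : ENNReal) ^ (1 / (t : ℝ))) < 1 := hG.eventually_lt_const hrad
  obtain ⟨t, ht1, ht⟩ := (hev.and (Filter.eventually_ge_atTop 1)).exists
  refine ⟨t, ht, ?_⟩
  have htpos : (0 : ℝ) < 1 / (t : ℝ) := by positivity
  have : (‖A ^ t‖₊ : ENNReal) < 1 := by
    by_contra hcon
    push_neg at hcon
    have := ENNReal.one_le_rpow hcon htpos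
    exact absurd ht1 (not_lt.mpr this)
  have h2 : (‖A ^ t‖₊ : ℝ) < 1 := by exact_mod_cast this
  exact h2

/- STATEMENT 9: (1) for an invertible A, the orbit span of any polynomial under the
pullback action is finite-dimensional; (2) conversely, a formal power series
(given by its homogeneous Taylor components F m, each of degree m) whose orbit span
under the pullback is finite-dimensional is a polynomial (finitely many nonzero
components), provided all eigenvalues of A have modulus < 1. -/
theorem stmt_9 (n : ℕ) (A : Matrix (Fin n) (Fin n) ℂ) (hA : IsUnit A)
    (heig : ∀ μ ∈ spectrum ℂ A, ‖μ‖ < 1) :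
    (∀ f : MvPolynomial (Fin n) ℂ,
      FiniteDimensional ℂ
        (Submodule.span ℂ (Set.range fun k : ℕ => (⇑(matrixPullback n A))^[k] f)))
    ∧
    (∀ F : ℕ → MvPolynomial (Fin n) ℂ,
      (∀ m, (F m).IsHomogeneous m) →
      FiniteDimensional ℂ
        (Submodule.span ℂ (Set.range fun k : ℕ =>
          (fun (G : ℕ → MvPolynomial (Fin n) ℂ) (m : ℕ) => matrixPullback n A (G m))^[k] F)) →
      ∃ N : ℕ, ∀ m ≥ N, F m = 0) := by
  constructor
  · -- part 1
    intro f
    have hsub : ∀ k : ℕ, ((⇑(matrixPullback n A))^[k] f).totalDegree ≤ f.totalDegree := by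
      intro k
      induction k with
      | zero => simp
      | succ k ih =>
        rw [Function.iterate_succ']
        exact (totalDegree_matrixPullback_le n A _).trans ih
    have hle : Submodule.span ℂ (Set.range fun k : ℕ => (⇑(matrixPullback n A))^[k] f)
        ≤ MvPolynomial.restrictTotalDegree (Fin n) ℂ f.totalDegree := by
      rw [Submodule.span_le]
      rintro _ ⟨k, rfl⟩
      rw [SetLike.mem_coe, MvPolynomial.mem_restrictTotalDegree]
      exact hsub k
    exact Submodule.finiteDimensional_of_le hle
  · -- part 2
    intro F hhom hFD
    classical
    set T : (ℕ → MvPolynomial (Fin n) ℂ) → (ℕ → MvPolynomial (Fin n) ℂ) :=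
      fun G m => matrixPullback n A (G m) with hTdef
    obtain ⟨t, ht1, htlt⟩ := exists_pow_norm_lt_one n A heig
    set W := Submodule.span ℂ (Set.range fun k : ℕ => T^[k] F) with hW
    set d := Module.finrank ℂ W with hd
    -- iterates componentwise
    have hTit : ∀ (k : ℕ) (m : ℕ), (T^[k] F) m = matrixPullback n (A ^ k) (F m) := by
      intro k
      induction k with
      | zero => intro m; simp [matrixPullback_one n]
      | succ k ih =>
        intro m
        rw [Function.iterate_succ']
        show matrixPullback n A ((T^[k] F) m) = _
        rw [ih m, ← AlgHom.comp_apply, matrixPullback_comp, ← pow_succ]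
    -- linear dependence
    have hmem : ∀ i : ℕ, T^[t * i] F ∈ W := fun i => Submodule.subset_span ⟨t * i, rfl⟩
    set v : Fin (d + 1) → W := fun i => ⟨T^[t * i.val] F, hmem i.val⟩ with hv
    have hnli : ¬ LinearIndependent ℂ v := by
      intro hli
      have := hli.fintype_card_le_finrank
      simp only [Fintype.card_fin] at this
      omega
    obtain ⟨g, hgsum, i₀, hgi₀⟩ := Fintype.not_linearIndependent_iff.mp hnli
    set g' : ℕ → ℂ := fun k => if h : k < d + 1 then g ⟨k, h⟩ else 0 with hg'
    have hsum : ∑ k ∈ range (d + 1), g' k • T^[t * k] F = 0 := by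
      have h1 := congrArg (fun x : W => (x : ℕ → MvPolynomial (Fin n) ℂ)) hgsum
      simp only [Submodule.coe_sum, Submodule.coe_smul, Submodule.coe_zero] at h1
      rw [← Fin.sum_univ_eq_sum_range (fun k => g' k • T^[t * k] F) (d + 1)]
      rw [← h1]
      refine Finset.sum_congr rfl fun i _ => ?_
      simp [hg', hv, i.isLt, not_lt.mpr i.is_le]
    have hex : ∃ k, g' k ≠ 0 := ⟨i₀.val, by simpa [hg', i₀.isLt, i₀.is_le] using hgi₀⟩
    set s := Nat.find hex with hs
    have hgs : g' s ≠ 0 := Nat.find_spec hex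
    have hmin : ∀ k < s, g' k = 0 := fun k hk => by
      by_contra hc; exact absurd (Nat.find_le hc) (not_le.mpr hk)
    have hslt : s < d + 1 := by
      by_contra hc
      exact hgs (dif_neg (by omega))
    -- constants
    set c : ℝ := max ‖A ^ t‖ (1/2) with hc
    have hc0 : 0 < c := lt_of_lt_of_le (by norm_num) (le_max_right _ _)
    have hc1 : c < 1 := max_lt htlt (by norm_num)
    have hAc : ‖A ^ t‖ ≤ c := le_max_left _ _
    set M : ℝ := (‖g' s‖)⁻¹ * ∑ k ∈ range (d + 1), ‖g' k‖ with hM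
    have hM0 : 0 ≤ M := by positivity
    -- choose N
    obtain ⟨N₀, hN₀⟩ : ∃ N₀ : ℕ, M * c ^ N₀ < 1 := by
      have htend : Filter.Tendsto (fun j : ℕ => M * c ^ j) Filter.atTop (nhds (M * 0)) :=
        (tendsto_pow_atTop_nhds_zero_of_lt_one hc0.le hc1).const_mul M
      rw [mul_zero] at htend
      exact (htend.eventually_lt_const (by norm_num : (0:ℝ) < 1)).exists
    refine ⟨max N₀ 1, fun m hm => ?_⟩
    by_contra hne
    set h : MvPolynomial (Fin n) ℂ := F m with hh
    -- componentwise relation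
    have hcomp : ∑ k ∈ range (d + 1), g' k • matrixPullback n (A ^ (t * k)) h = 0 := by
      have := congrFun hsum m
      simpa [Finset.sum_apply, Pi.smul_apply, hTit] using this
    -- factor out A^(t*s)
    have hfact : ∑ k ∈ range (d + 1),
        g' k • matrixPullback n (A ^ (t * k - t * s)) h = 0 := by
      apply matrixPullback_injective n (hA.pow (t * s))
      rw [map_zero, map_sum]
      rw [← hcomp]
      refine Finset.sum_congr rfl fun k hk => ?_
      rw [map_smul]
      rcases le_or_gt s k with hks | hks
      · congr 1
        rw [← AlgHom.comp_apply, matrixPullback_comp, ← pow_add,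
          Nat.sub_add_cancel (Nat.mul_le_mul_left t hks)]
      · simp [hmin k hks]
    have hsmem : s ∈ range (d + 1) := Finset.mem_range.mpr hslt
    have hkey : g' s • h = - ∑ k ∈ (range (d + 1)).erase s,
        g' k • matrixPullback n (A ^ (t * k - t * s)) h := by
      rw [← Finset.add_sum_erase _ _ hsmem, Nat.sub_self, pow_zero, matrixPullback_one] at hfact
      simp only [AlgHom.coe_id, id_eq] at hfact
      exact eq_neg_of_add_eq_zero_left hfact
    -- nonvanishing point
    have hx : ∃ x : Fin n → ℂ, MvPolynomial.eval x h ≠ 0 := by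
      by_contra hc
      push_neg at hc
      exact hne (MvPolynomial.funext fun x => by simpa using hc x)
    obtain ⟨x₀, hx₀⟩ := hx
    set r : ℝ := ‖x₀‖ with hr
    have hKc : IsCompact (Metric.closedBall (0 : Fin n → ℂ) r) := isCompact_closedBall _ _
    have hKne : (Metric.closedBall (0 : Fin n → ℂ) r).Nonempty :=
      ⟨0, Metric.mem_closedBall_self (norm_nonneg _)⟩
    have hcont : Continuous fun x : Fin n → ℂ => ‖MvPolynomial.eval x h‖ :=
      continuous_norm.comp (MvPolynomial.continuous_eval _)
    obtain ⟨y, hyK, hymax⟩ := hKc.exists_isMaxOn hKne hcont.continuousOn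
    have hymax' : ∀ z : Fin n → ℂ, ‖z‖ ≤ r →
        ‖MvPolynomial.eval z h‖ ≤ ‖MvPolynomial.eval y h‖ := by
      intro z hz
      exact isMaxOn_iff.mp hymax z (mem_closedBall_zero_iff.mpr hz)
    set S : ℝ := ‖MvPolynomial.eval y h‖ with hS
    have hS0 : 0 < S :=
      lt_of_lt_of_le (norm_pos_iff.mpr hx₀) (hymax' x₀ le_rfl)
    have hyr : ‖y‖ ≤ r := mem_closedBall_zero_iff.mp hyK
    have hm1 : 1 ≤ m := le_trans (le_max_right N₀ 1) hm
    -- per-term bound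
    have hterm : ∀ k ∈ (range (d + 1)).erase s,
        ‖g' k‖ *
          ‖MvPolynomial.eval y (matrixPullback n (A ^ (t * k - t * s)) h)‖
        ≤ ‖g' k‖ * (c ^ m * S) := by
      intro k hk
      rcases eq_or_ne (g' k) 0 with h0 | h0
      · simp [h0]
      have hks : s < k := by
        rcases lt_trichotomy k s with h1 | h1 | h1
        · exact absurd (hmin k h1) h0
        · exact absurd h1 (Finset.mem_erase.mp hk).1
        · exact h1
      refine mul_le_mul_of_nonneg_left ?_ (norm_nonneg _)
      set u : ℕ := k - s with hu
      have hu1 : 1 ≤ u := by omega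
      have hexp : t * k - t * s = t * u := by
        have h2 : t * u + t * s = t * k := by
          rw [hu, ← Nat.mul_add, Nat.sub_add_cancel hks.le]
        omega
      rw [hexp, eval_matrixPullback, pow_mul]
      set z := ((A ^ t) ^ u).mulVec y with hz
      have hzn : ‖z‖ ≤ c ^ u * r := by
        calc ‖z‖ ≤ ‖(A ^ t) ^ u‖ * ‖y‖ := Matrix.linfty_opNorm_mulVec _ _
          _ ≤ ‖A ^ t‖ ^ u * r :=
              mul_le_mul (norm_pow_le' _ (by omega)) hyr (norm_nonneg _) (by positivity)
          _ ≤ c ^ u * r := by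
              exact mul_le_mul_of_nonneg_right (pow_le_pow_left₀ (norm_nonneg _) hAc u)
                (norm_nonneg _)
      have hcu : (0 : ℝ) < c ^ u := pow_pos hc0 u
      set w : Fin n → ℂ := (((c ^ u : ℝ) : ℂ))⁻¹ • z with hw
      have hwz : ((c ^ u : ℝ) : ℂ) • w = z :=
        smul_inv_smul₀ (by exact_mod_cast hcu.ne') z
      have hwn : ‖w‖ ≤ r := by
        rw [hw, norm_smul, norm_inv, Complex.norm_real, Real.norm_of_nonneg hcu.le]
        rw [inv_mul_le_iff₀ hcu]
        calc ‖z‖ ≤ c ^ u * r := hzn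
          _ = c ^ u * r := rfl
      have heq : MvPolynomial.eval z h = ((c ^ u : ℝ) : ℂ) ^ m * MvPolynomial.eval w h := by
        rw [← hwz]
        exact eval_smul_isHomogeneous (hhom m) _ _
      rw [heq, norm_mul]
      have habs : ‖((c ^ u : ℝ) : ℂ) ^ m‖ = (c ^ u) ^ m := by
        rw [norm_pow, Complex.norm_real, Real.norm_of_nonneg hcu.le]
      rw [habs]
      calc (c ^ u) ^ m * ‖MvPolynomial.eval w h‖
          ≤ (c ^ u) ^ m * S := by
            exact mul_le_mul_of_nonneg_left (hymax' w hwn) (by positivity)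
        _ ≤ c ^ m * S := by
            refine mul_le_mul_of_nonneg_right ?_ hS0.le
            rw [← pow_mul]
            exact pow_le_pow_of_le_one hc0.le hc1.le (Nat.le_mul_of_pos_left m (by omega))
    -- combine
    have heval : ‖g' s‖ * S ≤
        (∑ k ∈ range (d + 1), ‖g' k‖) * (c ^ m * S) := by
      have he := congrArg (fun p => ‖MvPolynomial.eval y p‖) hkey
      rw [MvPolynomial.smul_eq_C_mul, map_mul, MvPolynomial.eval_C, norm_mul, map_neg,
        map_sum] at he
      rw [← hS] at he
      rw [he, norm_neg]
      calc ‖∑ k ∈ (range (d + 1)).erase s,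
              MvPolynomial.eval y (g' k • matrixPullback n (A ^ (t * k - t * s)) h)‖
          ≤ ∑ k ∈ (range (d + 1)).erase s,
              ‖MvPolynomial.eval y
                (g' k • matrixPullback n (A ^ (t * k - t * s)) h)‖ :=
            norm_sum_le _ _
        _ ≤ ∑ k ∈ (range (d + 1)).erase s, ‖g' k‖ * (c ^ m * S) := by
            refine Finset.sum_le_sum fun k hk => ?_
            rw [MvPolynomial.smul_eq_C_mul, map_mul, MvPolynomial.eval_C, norm_mul]
            exact hterm k hk
        _ ≤ ∑ k ∈ range (d + 1), ‖g' k‖ * (c ^ m * S) := by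
            refine Finset.sum_le_sum_of_subset_of_nonneg (Finset.erase_subset _ _)
              fun k _ _ => by positivity
        _ = (∑ k ∈ range (d + 1), ‖g' k‖) * (c ^ m * S) := by
            rw [Finset.sum_mul]
    have hgs0 : 0 < ‖g' s‖ := norm_pos_iff.mpr hgs
    have hfin : S ≤ M * c ^ m * S := by
      calc S = (‖g' s‖)⁻¹ * (‖g' s‖ * S) := by
            field_simp
        _ ≤ (‖g' s‖)⁻¹ *
            ((∑ k ∈ range (d + 1), ‖g' k‖) * (c ^ m * S)) :=
            mul_le_mul_of_nonneg_left heval (by positivity)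
        _ = M * c ^ m * S := by rw [hM]; ring
    have hlt : M * c ^ m < 1 := by
      refine lt_of_le_of_lt ?_ hN₀
      refine mul_le_mul_of_nonneg_left ?_ hM0
      exact pow_le_pow_of_le_one hc0.le hc1.le (le_trans (le_max_left N₀ 1) hm)
    have : S < S := by
      refine lt_of_le_of_lt hfin ?_
      calc M * c ^ m * S < 1 * S := mul_lt_mul_of_pos_right hlt hS0
        _ = S := one_mul S
    exact lt_irrefl S this
end

section
/- One-parameter complex subgroups of the torus (ℂ*)^k of the form t ↦ (t^{m₁}, …, t^{m_k}) with (m₁,…,m_k) ∈ ℤ^k are such that any element of (ℂ*)^k can be approximated arbitrarily well by elements lying on such one-parameter subgroups; equivalently, the union over all (m₁,…,m_k) ∈ ℤ^k, not all zero, of the images of these homomorphisms ℂ* → (ℂ*)^k is dense in (ℂ*)^k. -/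
open Filter Real Complex Topology

private lemma aux_tendsto_c_div (C : ℝ) :
    Tendsto (fun n : ℕ => C / ((n : ℝ) + 1)) atTop (nhds 0) := by
  have := tendsto_one_div_add_atTop_nhds_zero_nat.const_mul C
  simpa [mul_one_div, div_eq_mul_inv] using this

/- STATEMENT 11: the union over all nonzero m ∈ ℤ^k of the images of the
one-parameter subgroups φ_m(t) = (t^{m₁},…,t^{m_k}) is dense in (ℂ*)^k. -/
theorem stmt_11 (k : ℕ) (hk : 1 ≤ k) :
    Dense {x : Fin k → ℂˣ |
      ∃ m : Fin k → ℤ, m ≠ 0 ∧ ∃ t : ℂˣ, ∀ i, x i = t ^ (m i)} := by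
  intro x
  set i0 : Fin k := ⟨0, hk⟩ with hi0
  -- real and imaginary parts of logs
  set a : Fin k → ℝ := fun i => (Complex.log (x i)).re with ha
  set b : Fin k → ℝ := fun i => (Complex.log (x i)).im with hb
  set r : ℕ → Fin k → ℤ := fun n i => round (((n : ℝ) + 1) * b i / (2 * π)) with hr
  set q : ℕ → Fin k → ℤ := fun n i =>
    round (((n : ℝ) + 1) * a i - (r n i : ℝ) / ((n : ℝ) + 1)) with hq
  set d : ℕ → Fin k → ℤ := fun n i =>
    if i = i0 ∧ r n i0 + ((n : ℤ) + 1) * q n i0 = 0 then 1 else 0 with hd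
  set m : ℕ → Fin k → ℤ := fun n i => r n i + ((n : ℤ) + 1) * (q n i + d n i) with hm
  set s : ℕ → ℂ := fun n =>
    1 / ((n : ℂ) + 1) ^ 2 + (2 * (π : ℂ) / ((n : ℂ) + 1)) * Complex.I with hs
  set t : ℕ → ℂˣ := fun n => Units.mk0 (Complex.exp (s n)) (Complex.exp_ne_zero _) with ht
  set y : ℕ → Fin k → ℂˣ := fun n i => t n ^ m n i with hy
  have hmem : ∀ n, y n ∈ {x : Fin k → ℂˣ |
      ∃ m : Fin k → ℤ, m ≠ 0 ∧ ∃ t : ℂˣ, ∀ i, x i = t ^ (m i)} := by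
    intro n
    refine ⟨m n, ?_, t n, fun i => rfl⟩
    intro h0
    have h0' : r n i0 + ((n : ℤ) + 1) * (q n i0 + d n i0) = 0 := by
      have : m n i0 = 0 := by rw [h0]; rfl
      rw [hm] at this; exact this
    have hdd : d n i0 = if r n i0 + ((n : ℤ) + 1) * q n i0 = 0 then 1 else 0 := by
      simp [hd]
    by_cases hz : r n i0 + ((n : ℤ) + 1) * q n i0 = 0
    · rw [hdd, if_pos hz] at h0'
      have e : r n i0 + ((n : ℤ) + 1) * (q n i0 + 1)
          = (r n i0 + ((n : ℤ) + 1) * q n i0) + ((n : ℤ) + 1) := by ring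
      rw [e, hz] at h0'
      omega
    · rw [hdd, if_neg hz, add_zero] at h0'
      exact hz h0'
  -- convergence
  have hne : ∀ n : ℕ, ((n : ℝ) + 1) ≠ 0 := fun n => by positivity
  have hgb : ∀ i, Tendsto (fun n : ℕ => 2 * π * (r n i : ℝ) / ((n : ℝ) + 1)) atTop (nhds (b i)) := by
    intro i
    rw [tendsto_iff_norm_sub_tendsto_zero]
    apply squeeze_zero (fun n => norm_nonneg _) (g := fun n : ℕ => π / ((n : ℝ) + 1))
    · intro n
      have h1 : |(((n : ℝ) + 1) * b i / (2 * π)) - (r n i : ℝ)| ≤ 1 / 2 := abs_sub_round _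
      have hπ : (0 : ℝ) < π := Real.pi_pos
      have key : 2 * π * (r n i : ℝ) / ((n : ℝ) + 1) - b i
          = (-(2 * π) / ((n : ℝ) + 1)) * ((((n : ℝ) + 1) * b i / (2 * π)) - (r n i : ℝ)) := by
        field_simp
        ring
      rw [Real.norm_eq_abs, key, abs_mul]
      have h2 : |(-(2 * π) / ((n : ℝ) + 1))| = 2 * π / ((n : ℝ) + 1) := by
        rw [abs_div, abs_neg, abs_of_pos (by positivity : (0:ℝ) < 2 * π),
          abs_of_pos (by positivity : (0:ℝ) < (n : ℝ) + 1)]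
      rw [h2]
      calc 2 * π / ((n : ℝ) + 1) * |(((n : ℝ) + 1) * b i / (2 * π)) - (r n i : ℝ)|
          ≤ 2 * π / ((n : ℝ) + 1) * (1 / 2) :=
            mul_le_mul_of_nonneg_left h1 (by positivity)
        _ = π / ((n : ℝ) + 1) := by field_simp
    · exact aux_tendsto_c_div π
  have hfa : ∀ i, Tendsto (fun n : ℕ => (m n i : ℝ) / ((n : ℝ) + 1) ^ 2) atTop (nhds (a i)) := by
    intro i
    rw [tendsto_iff_norm_sub_tendsto_zero]
    apply squeeze_zero (fun n => norm_nonneg _) (g := fun n : ℕ => 2 / ((n : ℝ) + 1))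
    · intro n
      have h1 : |(((n : ℝ) + 1) * a i - (r n i : ℝ) / ((n : ℝ) + 1)) - (q n i : ℝ)| ≤ 1 / 2 :=
        abs_sub_round _
      have hdle : |(d n i : ℝ)| ≤ 1 := by
        simp only [hd]
        split_ifs <;> norm_num
      have key : (m n i : ℝ) / ((n : ℝ) + 1) ^ 2 - a i
          = (-(1) / ((n : ℝ) + 1)) * ((((n : ℝ) + 1) * a i - (r n i : ℝ) / ((n : ℝ) + 1)) - (q n i : ℝ))
            + (d n i : ℝ) / ((n : ℝ) + 1) := by
        have : (m n i : ℝ) = (r n i : ℝ) + ((n : ℝ) + 1) * ((q n i : ℝ) + (d n i : ℝ)) := by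
          rw [hm]; push_cast; ring
        rw [this]
        field_simp
        ring
      rw [Real.norm_eq_abs, key]
      have hb1 : |(-(1:ℝ) / ((n : ℝ) + 1)) * ((((n : ℝ) + 1) * a i - (r n i : ℝ) / ((n : ℝ) + 1)) - (q n i : ℝ))|
          ≤ (1 / ((n : ℝ) + 1)) * (1 / 2) := by
        rw [abs_mul, abs_div, abs_neg, abs_one, abs_of_pos (by positivity : (0:ℝ) < (n : ℝ) + 1)]
        exact mul_le_mul_of_nonneg_left h1 (by positivity)
      have hb2 : |(d n i : ℝ) / ((n : ℝ) + 1)| ≤ 1 / ((n : ℝ) + 1) := by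
        rw [abs_div, abs_of_pos (by positivity : (0:ℝ) < (n : ℝ) + 1)]
        gcongr
      calc |(-(1:ℝ) / ((n : ℝ) + 1)) * _ + (d n i : ℝ) / ((n : ℝ) + 1)|
          ≤ |(-(1:ℝ) / ((n : ℝ) + 1)) * _| + |(d n i : ℝ) / ((n : ℝ) + 1)| := abs_add_le _ _
        _ ≤ (1 / ((n : ℝ) + 1)) * (1 / 2) + 1 / ((n : ℝ) + 1) := add_le_add hb1 hb2
        _ ≤ 2 / ((n : ℝ) + 1) := by
            have hpos : (0:ℝ) < (n : ℝ) + 1 := by positivity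
            have h1 : (1 / ((n : ℝ) + 1)) * (1 / 2) ≤ 1 / ((n : ℝ) + 1) := by
              nlinarith [one_div_pos.mpr hpos]
            have h2 : 1 / ((n : ℝ) + 1) + 1 / ((n : ℝ) + 1) = 2 / ((n : ℝ) + 1) := by ring
            linarith
    · exact aux_tendsto_c_div 2
  have hyx : Tendsto y atTop (nhds x) := by
    rw [tendsto_pi_nhds]
    intro i
    rw [Units.isEmbedding_val₀.tendsto_nhds_iff]
    have hval : ∀ n, ((y n i : ℂˣ) : ℂ)
        = Complex.exp (((m n i : ℝ) / ((n : ℝ) + 1) ^ 2 : ℝ)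
            + ((2 * π * (r n i : ℝ) / ((n : ℝ) + 1) : ℝ)) * Complex.I) := by
      intro n
      have hcne : ((n : ℂ) + 1) ≠ 0 := by
        have : ((n : ℂ) + 1) = ((n + 1 : ℕ) : ℂ) := by push_cast; ring
        rw [this]
        exact_mod_cast Nat.succ_ne_zero n
      have : ((y n i : ℂˣ) : ℂ) = Complex.exp ((m n i : ℂ) * s n) := by
        simp only [hy, ht, Units.val_zpow_eq_zpow_val, Units.val_mk0]
        rw [← Complex.exp_int_mul]
      rw [this]
      have hmC : (m n i : ℂ) = (r n i : ℂ) + ((n : ℂ) + 1) * ((q n i : ℂ) + (d n i : ℂ)) := by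
        rw [hm]; push_cast; ring
      have harg : (m n i : ℂ) * s n
          = ((((m n i : ℝ) / ((n : ℝ) + 1) ^ 2 : ℝ)) : ℂ)
              + ((((2 * π * (r n i : ℝ) / ((n : ℝ) + 1) : ℝ))) : ℂ) * Complex.I
            + ((q n i + d n i : ℤ) : ℂ) * (2 * (π : ℂ) * Complex.I) := by
        rw [hs]
        push_cast [hmC]
        field_simp
        ring
      rw [harg, Complex.exp_add, Complex.exp_int_mul_two_pi_mul_I, mul_one]
    have hlim : Tendsto (fun n : ℕ => (((m n i : ℝ) / ((n : ℝ) + 1) ^ 2 : ℝ) : ℂ)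
        + (((2 * π * (r n i : ℝ) / ((n : ℝ) + 1) : ℝ)) : ℂ) * Complex.I) atTop
        (nhds ((a i : ℂ) + (b i : ℂ) * Complex.I)) :=
      Tendsto.add
        ((Complex.continuous_ofReal.tendsto (a i)).comp (hfa i))
        (Tendsto.mul_const _ ((Complex.continuous_ofReal.tendsto (b i)).comp (hgb i)))
    have hbig := (Complex.continuous_exp.tendsto _).comp hlim
    have hxval : Complex.exp ((a i : ℂ) + (b i : ℂ) * Complex.I) = ((x i : ℂˣ) : ℂ) := by
      rw [ha, hb]
      simp only [Complex.re_add_im]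
      exact Complex.exp_log (Units.ne_zero (x i))
    rw [hxval] at hbig
    exact hbig.congr fun n => (hval n).symm
  exact mem_closure_of_tendsto hyx (Filter.Eventually.of_forall hmem)
end

section
/- Let X be a complex manifold (or an open subset of ℂⁿ), and let γ : X → X be a holomorphic map whose image γ(X) is relatively compact in X. Then the pullback operator γ* : H⁰_b(O_X) → H⁰_b(O_X), f ↦ f ∘ γ, on the Banach space of bounded holomorphic functions on X with the sup-norm, is a compact operator. -/
/-! Every such `g` is `(f|K) ∘ γ` with `K = closure (γ '' U)` compact. By the Schwarz lemma,
holomorphic functions bounded by `C` on `U` are uniformly Lipschitz near each point of `U`, hence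
equicontinuous; by Arzelà–Ascoli (this is Montel's theorem) their restrictions to `K` form a
relatively compact set, and precomposition with `γ : U → K` is continuous. -/

open Metric Set Filter Topology BoundedContinuousFunction

variable {E F : Type*} [NormedAddCommGroup E] [NormedSpace ℂ E]
  [NormedAddCommGroup F] [NormedSpace ℂ F]

def boundedHolomorphicOn (U : Set E) (C : ℝ) : Set (E → F) :=
  {f | DifferentiableOn ℂ f U ∧ ∀ x ∈ U, ‖f x‖ ≤ C}

theorem dist_le_of_mem_boundedHolomorphicOn {U : Set E} {C : ℝ} {f : E → F}
    (hf : f ∈ boundedHolomorphicOn U C) {z w : E} {r : ℝ} (hball : ball z r ⊆ U)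
    (hw : w ∈ ball z r) : dist (f w) (f z) ≤ 2 * C / r * dist w z := by
  refine Complex.dist_le_div_mul_dist_of_mapsTo_ball (hf.1.mono hball) (fun x hx ↦ ?_) hw
  calc dist (f x) (f z) ≤ ‖f x‖ + ‖f z‖ := dist_le_norm_add_norm _ _
    _ ≤ C + C :=
      add_le_add (hf.2 x (hball hx)) (hf.2 z (hball (mem_ball_self (pos_of_mem_ball hw))))
    _ = 2 * C := by ring

theorem equicontinuousAt_boundedHolomorphicOn {U : Set E} (hU : IsOpen U) (C : ℝ) {x : E}
    (hx : x ∈ U) :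
    EquicontinuousAt ((↑) : boundedHolomorphicOn (F := F) U C → E → F) x := by
  obtain ⟨r, hr, hball⟩ := Metric.isOpen_iff.1 hU x hx
  refine equicontinuousAt_of_continuity_modulus (fun y ↦ 2 * C / r * dist y x) ?_ _ ?_
  · simpa using ((continuous_id.dist (continuous_const (y := x))).const_mul (2 * C / r)).tendsto x
  · filter_upwards [ball_mem_nhds x hr] with y hy f
    rw [dist_comm]
    exact dist_le_of_mem_boundedHolomorphicOn f.2 hball hy

theorem isCompact_closure_restrict_boundedHolomorphicOn [ProperSpace F] {U K : Set E}
    (hU : IsOpen U) (hK : IsCompact K) (hKU : K ⊆ U) (C : ℝ) :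
    IsCompact (closure {h : K →ᵇ F | ∃ f ∈ boundedHolomorphicOn U C, ∀ y : K, h y = f y}) := by
  have : CompactSpace K := isCompact_iff_compactSpace.1 hK
  set B := {h : K →ᵇ F | ∃ f ∈ boundedHolomorphicOn U C, ∀ y : K, h y = f y}
  have hequi : EquicontinuousOn ((↑) : boundedHolomorphicOn (F := F) U C → E → F) K :=
    fun x hx ↦ (equicontinuousAt_boundedHolomorphicOn hU C (hKU hx)).equicontinuousWithinAt K
  rw [← equicontinuous_restrict_iff] at hequi
  choose u hu using fun h : B ↦ h.2
  have hcoe : ((↑) : B → K → F) =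
      (K.domRestrict ∘ ((↑) : boundedHolomorphicOn U C → E → F)) ∘ fun h ↦ ⟨u h, (hu h).1⟩ := by
    funext h y
    exact (hu h).2 y
  refine arzela_ascoli (closedBall 0 C) (isCompact_closedBall 0 C) B ?_ (hcoe ▸ hequi.comp _)
  rintro h y ⟨f, hf, hhf⟩
  rw [mem_closedBall_zero_iff, hhf]
  exact hf.2 y (hKU y.2)

theorem isCompact_closure_image_compContinuous {X Y β : Type*} [TopologicalSpace X]
    [TopologicalSpace Y] [MetricSpace β] (φ : C(X, Y)) {B : Set (Y →ᵇ β)}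
    (hB : IsCompact (closure B)) : IsCompact (closure ((·.compContinuous φ) '' B)) := by
  have hcpt := hB.image (continuous_compContinuous φ)
  exact hcpt.of_isClosed_subset isClosed_closure
    (closure_minimal (image_mono subset_closure) hcpt.isClosed)

theorem stmt_12_general (n : ℕ) (U : Set (EuclideanSpace ℂ (Fin n))) (hU : IsOpen U)
    (γ : EuclideanSpace ℂ (Fin n) → EuclideanSpace ℂ (Fin n))
    (hγhol : DifferentiableOn ℂ γ U)
    (hcpt : IsCompact (closure (γ '' U))) (hsub : closure (γ '' U) ⊆ U)
    (C : ℝ) :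
    IsCompact (closure {g : BoundedContinuousFunction ↥U ℂ |
      ∃ f : EuclideanSpace ℂ (Fin n) → ℂ, DifferentiableOn ℂ f U ∧
        (∀ x ∈ U, ‖f x‖ ≤ C) ∧ ∀ x : ↥U, g x = f (γ ↑x)}) := by
  set K := closure (γ '' U)
  have : CompactSpace K := isCompact_iff_compactSpace.1 hcpt
  let γK : C(U, K) := ⟨fun x ↦ ⟨γ x, subset_closure (mem_image_of_mem γ x.2)⟩,
    hγhol.continuousOn.domRestrict.subtype_mk _⟩
  refine (isCompact_closure_image_compContinuous γK
    (isCompact_closure_restrict_boundedHolomorphicOn hU hcpt hsub C)).of_isClosed_subset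
    isClosed_closure (closure_mono ?_)
  rintro g ⟨f, hf, hfC, hgf⟩
  have hfK : Continuous (K.domRestrict f) := (hf.continuousOn.mono hsub).domRestrict
  exact ⟨mkOfCompact ⟨_, hfK⟩, ⟨f, ⟨hf, hfC⟩, fun _ ↦ rfl⟩, ext fun x ↦ (hgf x).symm⟩

theorem stmt_12 (n : ℕ) (U : Set (EuclideanSpace ℂ (Fin n))) (hU : IsOpen U)
    (γ : EuclideanSpace ℂ (Fin n) → EuclideanSpace ℂ (Fin n))
    (hγU : Set.MapsTo γ U U) (hγhol : DifferentiableOn ℂ γ U)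
    (hcpt : IsCompact (closure (γ '' U))) (hsub : closure (γ '' U) ⊆ U)
    (C : ℝ) :
    IsCompact (closure {g : BoundedContinuousFunction ↥U ℂ |
      ∃ f : EuclideanSpace ℂ (Fin n) → ℂ, DifferentiableOn ℂ f U ∧
        (∀ x ∈ U, ‖f x‖ ≤ C) ∧ ∀ x : ↥U, g x = f (γ ↑x)}) :=
  stmt_12_general n U hU γ hγhol hcpt hsub C
end
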